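/- Möbius inversion on the pruning poset: for a finite rooted tree T with edge set E and any two functions f, g from subsets of E to the reals, one has g(K) = ∑_{H ≼_P K} f(H) for all K ⊆ E if and only if f(K) = ∑_{H ≼_P K} μ(H,K) g(H) for all K ⊆ E, where μ(H,K) = (−1)^{|H|−|K|} when H \ K is an antichain of edges of the stump tree T_γ(K), and 0 otherwise. -/

import Mathlib

open scoped Classical

/-- A finite rooted tree, encoded by its tree partial order on the vertex set `V`:
the root is the bottom element `⊥`, and any two ancestors of a common vertex are
comparable. -/
def TreeOrder (V : Type*) [PartialOrder V] [OrderBot V] : Prop :=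
  ∀ a b c : V, b ≤ a → c ≤ a → (b ≤ c ∨ c ≤ b)

/-- Edges of the rooted tree, identified with their upper ends (the non-root vertices).
The induced partial order on edges is the subtype order. -/
abbrev Edge (V : Type*) [PartialOrder V] [OrderBot V] := {v : V // v ≠ ⊥}

variable {V : Type*} [Fintype V] [DecidableEq V] [PartialOrder V] [OrderBot V]

/-- The stump set `V_γ(H)`: the vertex set of the connected component of the root
in the forest `T − H`. -/
def stump (H : Finset (Edge V)) : Set V :=
  {v | ∀ e ∈ H, ¬ (e.val ≤ v)}

/-- The pruning order: `H ≼_P K` iff `H = K ∪ A` for some set `A` of edges of the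
stump tree of `T − K`. -/
def pleP (H K : Finset (Edge V)) : Prop :=
  ∃ A : Finset (Edge V), (∀ e ∈ A, e.val ∈ stump K) ∧ H = K ∪ A

/-- The explicit Möbius function of the pruning poset: for `H ≼_P K` it equals
`(−1)^{|H|−|K|}` when `H \ K` is an antichain of edges (of the stump tree `T_γ(K)`;
containment in `E_γ(K)` is automatic for `H ≼_P K`), and `0` otherwise. -/
noncomputable def pruningMu (H K : Finset (Edge V)) : ℝ :=
  if IsAntichain (· ≤ ·) ((H \ K : Finset (Edge V)) : Set (Edge V)) then
    (-1 : ℝ) ^ (H.card - K.card) else 0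

lemma pleP_iff {H K : Finset (Edge V)} :
    pleP H K ↔ K ⊆ H ∧ ∀ e ∈ H \ K, e.val ∈ stump K := by
  constructor
  · rintro ⟨A, hA, rfl⟩
    exact ⟨Finset.subset_union_left, fun e he => hA e (by
      simp only [Finset.mem_sdiff, Finset.mem_union] at he; tauto)⟩
  · rintro ⟨hKH, h⟩
    exact ⟨H \ K, h, (Finset.union_sdiff_of_subset hKH).symm⟩

lemma pleP_refl (K : Finset (Edge V)) : pleP K K :=
  ⟨∅, by simp, by simp⟩

lemma stump_anti {H K : Finset (Edge V)} (h : K ⊆ H) : stump H ⊆ stump K :=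
  fun _ hv e he => hv e (h he)

lemma pleP_trans {L H K : Finset (Edge V)} (h1 : pleP L H) (h2 : pleP H K) :
    pleP L K := by
  rw [pleP_iff] at *
  obtain ⟨hHL, h1⟩ := h1
  obtain ⟨hKH, h2⟩ := h2
  refine ⟨hKH.trans hHL, fun e he => ?_⟩
  rw [Finset.mem_sdiff] at he
  by_cases heH : e ∈ H
  · exact h2 e (Finset.mem_sdiff.2 ⟨heH, he.2⟩)
  · exact stump_anti hKH (h1 e (Finset.mem_sdiff.2 ⟨he.1, heH⟩))

lemma sum_powerset_neg_one_pow_card_real {α : Type*} [DecidableEq α] (x : Finset α) :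
    (∑ m ∈ x.powerset, (-1 : ℝ) ^ m.card) = if x = ∅ then 1 else 0 := by
  have := Finset.sum_powerset_neg_one_pow_card (x := x)
  have h2 : ((∑ m ∈ x.powerset, (-1 : ℤ) ^ m.card : ℤ) : ℝ)
      = ∑ m ∈ x.powerset, (-1 : ℝ) ^ m.card := by push_cast; ring_nf
  rw [← h2, this]
  split_ifs <;> norm_num

/-- Convolution identity 1: summing `μ(H,K)` over the interval `[L, K]`. -/
lemma conv1 (L K : Finset (Edge V)) :
    (∑ H : Finset (Edge V), if pleP H K ∧ pleP L H then pruningMu H K else 0)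
      = if L = K then (1 : ℝ) else 0 := by
  by_cases hLK : pleP L K
  · set S : Finset (Edge V) := L \ K with hS
    set M : Finset (Edge V) := S.filter (fun e => ∀ d ∈ S, e ≤ d → e = d) with hM
    obtain ⟨hKL, hSstump⟩ := pleP_iff.1 hLK
    have hMS : M ⊆ S := Finset.filter_subset _ _
    have step1 : ∀ H : Finset (Edge V),
        (if pleP H K ∧ pleP L H then pruningMu H K else 0)
        = if (pleP H K ∧ pleP L H) ∧
            IsAntichain (· ≤ ·) ((H \ K : Finset (Edge V)) : Set (Edge V)) then
            (-1 : ℝ) ^ (H \ K).card else 0 := by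
      intro H
      by_cases hP : pleP H K ∧ pleP L H
      · have hKH : K ⊆ H := (pleP_iff.1 hP.1).1
        by_cases hA : IsAntichain (· ≤ ·) ((H \ K : Finset (Edge V)) : Set (Edge V))
        · simp only [hP, hA, and_true, if_true, pruningMu, Finset.card_sdiff_of_subset hKH]
        · rw [if_pos hP, if_neg (fun h => hA h.2), pruningMu, if_neg hA]
      · simp [hP]
    rw [Finset.sum_congr rfl (fun H _ => step1 H), ← Finset.sum_filter]
    have key : (∑ H ∈ Finset.univ.filter (fun H => (pleP H K ∧ pleP L H) ∧
          IsAntichain (· ≤ ·) ((H \ K : Finset (Edge V)) : Set (Edge V))),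
          (-1 : ℝ) ^ (H \ K).card)
        = ∑ A ∈ M.powerset, (-1 : ℝ) ^ A.card := by
      refine Finset.sum_nbij' (fun H => H \ K) (fun A => K ∪ A) ?_ ?_ ?_ ?_ ?_
      · intro H hH
        simp only [Finset.mem_filter, Finset.mem_univ, true_and] at hH
        obtain ⟨⟨hHK, hLH⟩, hanti⟩ := hH
        obtain ⟨hKH, _⟩ := pleP_iff.1 hHK
        obtain ⟨hHL, hstH⟩ := pleP_iff.1 hLH
        rw [Finset.mem_powerset]
        intro e he
        rw [Finset.mem_sdiff] at he
        rw [hM, Finset.mem_filter]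
        refine ⟨Finset.mem_sdiff.2 ⟨hHL he.1, he.2⟩, fun d hd hed => ?_⟩
        rw [hS, Finset.mem_sdiff] at hd
        by_cases hdH : d ∈ H
        · by_contra hne
          exact hanti (by simpa using he) (by simp [Finset.mem_sdiff, hdH, hd.2]) hne hed
        · exact absurd hed (hstH d (Finset.mem_sdiff.2 ⟨hd.1, hdH⟩) e he.1)
      · intro A hA
        rw [Finset.mem_powerset] at hA
        have hAS : A ⊆ S := hA.trans hMS
        have hAK : ∀ e ∈ A, e ∉ K := fun e he => (Finset.mem_sdiff.1 (hAS he)).2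
        have hcup : (K ∪ A) \ K = A := by
          rw [Finset.union_sdiff_left]
          exact Finset.sdiff_eq_self_of_disjoint
            (Finset.disjoint_left.2 fun e he => hAK e he)
        simp only [Finset.mem_filter, Finset.mem_univ, true_and]
        refine ⟨⟨?_, ?_⟩, ?_⟩
        · exact pleP_iff.2 ⟨Finset.subset_union_left, fun e he => by
            rw [hcup] at he; exact hSstump e (hAS he)⟩
        · refine pleP_iff.2 ⟨Finset.union_subset hKL (hAS.trans Finset.sdiff_subset), ?_⟩
          intro e he
          rw [Finset.mem_sdiff, Finset.mem_union] at he
          push_neg at he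
          obtain ⟨heL, heK, heA⟩ := he
          intro d hd hde
          rw [Finset.mem_union] at hd
          rcases hd with hd | hd
          · exact hSstump e (Finset.mem_sdiff.2 ⟨heL, heK⟩) d hd hde
          · have hdM := hA hd
            rw [hM, Finset.mem_filter] at hdM
            have hdeq : d = e :=
              hdM.2 e (Finset.mem_sdiff.2 ⟨heL, heK⟩) (show d ≤ e from hde)
            exact heA (hdeq ▸ hd)
        · rw [hcup]
          intro a ha b hb hab hle
          have haM : a ∈ M := hA ha
          rw [hM, Finset.mem_filter] at haM
          exact hab (haM.2 b (hAS hb) hle)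
      · intro H hH
        simp only [Finset.mem_filter, Finset.mem_univ, true_and] at hH
        exact Finset.union_sdiff_of_subset (pleP_iff.1 hH.1.1).1
      · intro A hA
        rw [Finset.mem_powerset] at hA
        have hAS : A ⊆ S := hA.trans hMS
        show (K ∪ A) \ K = A
        rw [Finset.union_sdiff_left]
        exact Finset.sdiff_eq_self_of_disjoint
          (Finset.disjoint_left.2 fun e he => (Finset.mem_sdiff.1 (hAS he)).2)
      · intro H _; rfl
    rw [key, sum_powerset_neg_one_pow_card_real]
    have hMe : M = ∅ ↔ L = K := by
      constructor
      · intro hMe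
        by_contra hne
        have hSne : S.Nonempty := by
          rw [Finset.nonempty_iff_ne_empty]
          intro h
          exact hne (Finset.Subset.antisymm
            (by rw [← Finset.sdiff_eq_empty_iff_subset] at *; exact h) hKL)
        obtain ⟨m, hm, hmax⟩ := S.exists_maximal hSne
        have : m ∈ M := by
          rw [hM, Finset.mem_filter]
          exact ⟨hm, fun d hd hmd => by
            by_contra hne'
            exact hne' (le_antisymm hmd (hmax hd hmd))⟩
        simp [hMe] at this
      · intro h
        subst h
        have : S = ∅ := by simp [hS]
        rw [hM, this]; rfl
    simp only [hMe]
  · have h1 : ∀ H : Finset (Edge V),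
        (if pleP H K ∧ pleP L H then pruningMu H K else 0) = 0 := by
      intro H
      rw [if_neg]
      rintro ⟨h1, h2⟩
      exact hLK (pleP_trans h2 h1)
    rw [Finset.sum_congr rfl (fun H _ => h1 H), Finset.sum_const_zero, if_neg]
    rintro rfl
    exact hLK (pleP_refl L)

/-- Convolution identity 2: summing `μ(L,H)` over the interval `[L, K]`. -/
lemma conv2 (L K : Finset (Edge V)) :
    (∑ H : Finset (Edge V), if pleP H K ∧ pleP L H then pruningMu L H else 0)
      = if L = K then (1 : ℝ) else 0 := by
  by_cases hLK : pleP L K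
  · set S : Finset (Edge V) := L \ K with hS
    set M : Finset (Edge V) := S.filter (fun e => ∀ d ∈ S, d ≤ e → d = e) with hM
    obtain ⟨hKL, hSstump⟩ := pleP_iff.1 hLK
    have hMS : M ⊆ S := Finset.filter_subset _ _
    have step1 : ∀ H : Finset (Edge V),
        (if pleP H K ∧ pleP L H then pruningMu L H else 0)
        = if (pleP H K ∧ pleP L H) ∧
            IsAntichain (· ≤ ·) ((L \ H : Finset (Edge V)) : Set (Edge V)) then
            (-1 : ℝ) ^ (L \ H).card else 0 := by
      intro H
      by_cases hP : pleP H K ∧ pleP L H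
      · have hHL : H ⊆ L := (pleP_iff.1 hP.2).1
        by_cases hA : IsAntichain (· ≤ ·) ((L \ H : Finset (Edge V)) : Set (Edge V))
        · simp only [hP, hA, and_true, if_true, pruningMu, Finset.card_sdiff_of_subset hHL]
        · rw [if_pos hP, if_neg (fun h => hA h.2), pruningMu, if_neg hA]
      · simp [hP]
    rw [Finset.sum_congr rfl (fun H _ => step1 H), ← Finset.sum_filter]
    have key : (∑ H ∈ Finset.univ.filter (fun H => (pleP H K ∧ pleP L H) ∧
          IsAntichain (· ≤ ·) ((L \ H : Finset (Edge V)) : Set (Edge V))),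
          (-1 : ℝ) ^ (L \ H).card)
        = ∑ B ∈ M.powerset, (-1 : ℝ) ^ B.card := by
      refine Finset.sum_nbij' (fun H => L \ H) (fun B => L \ B) ?_ ?_ ?_ ?_ ?_
      · intro H hH
        simp only [Finset.mem_filter, Finset.mem_univ, true_and] at hH
        obtain ⟨⟨hHK, hLH⟩, hanti⟩ := hH
        obtain ⟨hKH, _⟩ := pleP_iff.1 hHK
        obtain ⟨hHL, hstH⟩ := pleP_iff.1 hLH
        rw [Finset.mem_powerset]
        intro e he
        rw [Finset.mem_sdiff] at he
        rw [hM, Finset.mem_filter]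
        refine ⟨Finset.mem_sdiff.2 ⟨he.1, fun hK => he.2 (hKH hK)⟩, fun d hd hde => ?_⟩
        rw [hS, Finset.mem_sdiff] at hd
        by_cases hdH : d ∈ H
        · exact absurd hde (hstH e (Finset.mem_sdiff.2 ⟨he.1, he.2⟩) d hdH)
        · by_contra hne
          exact hanti (by simp [Finset.mem_sdiff, hd.1, hdH])
            (by simpa using he) hne hde
      · intro B hB
        rw [Finset.mem_powerset] at hB
        have hBS : B ⊆ S := hB.trans hMS
        have hBK : ∀ e ∈ B, e ∉ K := fun e he => (Finset.mem_sdiff.1 (hBS he)).2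
        have hBL : B ⊆ L := hBS.trans Finset.sdiff_subset
        have hKH : K ⊆ L \ B :=
          fun e he => Finset.mem_sdiff.2 ⟨hKL he, fun hB' => hBK e hB' he⟩
        simp only [Finset.mem_filter, Finset.mem_univ, true_and]
        have hLB : L \ (L \ B) = B := Finset.sdiff_sdiff_eq_self hBL
        refine ⟨⟨?_, ?_⟩, ?_⟩
        · refine pleP_iff.2 ⟨hKH, fun e he => ?_⟩
          rw [Finset.mem_sdiff, Finset.mem_sdiff] at he
          exact hSstump e (Finset.mem_sdiff.2 ⟨he.1.1, he.2⟩)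
        · refine pleP_iff.2 ⟨Finset.sdiff_subset, fun e he => ?_⟩
          rw [hLB] at he
          intro d hd hde
          rw [Finset.mem_sdiff] at hd
          by_cases hdK : d ∈ K
          · exact hSstump e (hBS he) d hdK hde
          · have heM := hB he
            rw [hM, Finset.mem_filter] at heM
            have hdeq : d = e :=
              heM.2 d (Finset.mem_sdiff.2 ⟨hd.1, hdK⟩) (show d ≤ e from hde)
            exact hd.2 (hdeq ▸ he)
        · rw [hLB]
          intro a ha b hb hab hle
          have hbM : b ∈ M := hB hb
          rw [hM, Finset.mem_filter] at hbM
          exact hab (hbM.2 a (hBS ha) hle)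
      · intro H hH
        simp only [Finset.mem_filter, Finset.mem_univ, true_and] at hH
        exact Finset.sdiff_sdiff_eq_self (pleP_iff.1 hH.1.2).1
      · intro B hB
        rw [Finset.mem_powerset] at hB
        exact Finset.sdiff_sdiff_eq_self ((hB.trans hMS).trans Finset.sdiff_subset)
      · intro H _; rfl
    rw [key, sum_powerset_neg_one_pow_card_real]
    have hMe : M = ∅ ↔ L = K := by
      constructor
      · intro hMe
        by_contra hne
        have hSne : S.Nonempty := by
          rw [Finset.nonempty_iff_ne_empty]
          intro h
          exact hne (Finset.Subset.antisymm
            (by rw [← Finset.sdiff_eq_empty_iff_subset] at *; exact h) hKL)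
        obtain ⟨m, hm, hmin⟩ := S.exists_minimal hSne
        have : m ∈ M := by
          rw [hM, Finset.mem_filter]
          exact ⟨hm, fun d hd hdm => by
            by_contra hne'
            exact hne' (le_antisymm hdm (hmin hd hdm))⟩
        simp [hMe] at this
      · intro h
        subst h
        have : S = ∅ := by simp [hS]
        rw [hM, this]; rfl
    simp only [hMe]
  · have h1 : ∀ H : Finset (Edge V),
        (if pleP H K ∧ pleP L H then pruningMu L H else 0) = 0 := by
      intro H
      rw [if_neg]
      rintro ⟨h1, h2⟩
      exact hLK (pleP_trans h2 h1)
    rw [Finset.sum_congr rfl (fun H _ => h1 H), Finset.sum_const_zero, if_neg]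
    rintro rfl
    exact hLK (pleP_refl L)

/-- Möbius inversion on the pruning poset: for functions
`f, g : 2^E → ℝ`, one has `g(K) = ∑_{H ≼_P K} f(H)` for all `K` iff
`f(K) = ∑_{H ≼_P K} μ(H,K) g(H)` for all `K`, with `μ` the explicit Möbius function. -/
theorem mobius_inversion_pruning (hT : TreeOrder V)
    (f g : Finset (Edge V) → ℝ) :
    (∀ K : Finset (Edge V),
        g K = ∑ H : Finset (Edge V), if pleP H K then f H else 0) ↔
    (∀ K : Finset (Edge V),
        f K = ∑ H : Finset (Edge V), if pleP H K then pruningMu H K * g H else 0) := by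
  constructor
  · intro hg K
    have swap : ∀ H : Finset (Edge V), (if pleP H K then pruningMu H K * g H else 0)
        = ∑ L : Finset (Edge V), if pleP H K ∧ pleP L H then pruningMu H K * f L else 0 := by
      intro H
      by_cases hP : pleP H K
      · simp only [hP, if_true, true_and, hg H, Finset.mul_sum]
        exact Finset.sum_congr rfl fun L _ => by by_cases hQ : pleP L H <;> simp [hQ]
      · simp [hP]
    rw [Finset.sum_congr rfl (fun H _ => swap H), Finset.sum_comm]
    have inner : ∀ L : Finset (Edge V),
        (∑ H : Finset (Edge V), if pleP H K ∧ pleP L H then pruningMu H K * f L else 0)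
        = (if L = K then (1:ℝ) else 0) * f L := by
      intro L
      rw [← conv1 L K, Finset.sum_mul]
      exact Finset.sum_congr rfl fun H _ => by
        by_cases h : pleP H K ∧ pleP L H <;> simp [h]
    rw [Finset.sum_congr rfl (fun L _ => inner L)]
    simp only [ite_mul, one_mul, zero_mul]
    rw [Finset.sum_ite_eq' Finset.univ K f]
    simp
  · intro hf K
    have swap : ∀ H : Finset (Edge V), (if pleP H K then f H else 0)
        = ∑ L : Finset (Edge V), if pleP H K ∧ pleP L H then pruningMu L H * g L else 0 := by
      intro H
      by_cases hP : pleP H K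
      · rw [if_pos hP, hf H]
        exact Finset.sum_congr rfl fun L _ => by by_cases hQ : pleP L H <;> simp [hQ, hP]
      · simp [hP]
    rw [Finset.sum_congr rfl (fun H _ => swap H), Finset.sum_comm]
    have inner : ∀ L : Finset (Edge V),
        (∑ H : Finset (Edge V), if pleP H K ∧ pleP L H then pruningMu L H * g L else 0)
        = (if L = K then (1:ℝ) else 0) * g L := by
      intro L
      rw [← conv2 L K, Finset.sum_mul]
      exact Finset.sum_congr rfl fun H _ => by
        by_cases h : pleP H K ∧ pleP L H <;> simp [h]
    rw [Finset.sum_congr rfl (fun L _ => inner L)]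
    simp only [ite_mul, one_mul, zero_mul]
    rw [Finset.sum_ite_eq' Finset.univ K g]
    simp
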